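/- arXiv:2205.07544 — 7 statements merged into one kernel-verified Lean document; each statement's English description precedes it below -/
import Mathlib

section
/- If f: ℝⁿ → ℝ is differentiable with L-Lipschitz gradient, and the iterates satisfy x_{k+1} = x_k - (1/L)∇f(x_k), then for each N ≥ 1, min_{0 ≤ k ≤ N-1} ‖∇f(x_k)‖ ≤ sqrt(2L(f(x_0) - f(x_*))/N), where x_* is a global minimizer of f. -/
/-!
Descent lemma: if `∇f` is `L`-Lipschitz, then along `t ↦ x + t • v` the derivative of `f` exceeds
`⟪∇f x, v⟫` by at most `L t ‖v‖²`, so `f (x + v) ≤ f x + ⟪∇f x, v⟫ + L/2 ‖v‖²`. For `v = -∇f x / L`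
each gradient step lowers `f` by at least `‖∇f x‖² / (2L)`. Summing over `N` steps, these decreases
telescope to at most `f x₀ - f x_*`, so the smallest of the `N` terms is at most `(f x₀ - f x_*) / N`.
-/

open scoped RealInnerProductSpace

open Finset

section GradientDescent

variable {E : Type*} [NormedAddCommGroup E] [InnerProductSpace ℝ E] [CompleteSpace E]
  {f : E → ℝ} {L : ℝ}

theorem le_add_inner_gradient_add_of_lipschitz_gradient (hdiff : Differentiable ℝ f)
    (hlip : ∀ x y, ‖gradient f x - gradient f y‖ ≤ L * ‖x - y‖) (x v : E) :
    f (x + v) ≤ f x + ⟪gradient f x, v⟫ + L / 2 * ‖v‖ ^ 2 := by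
  set φ : ℝ → ℝ := fun t ↦ f (x + t • v) - t * ⟪gradient f x, v⟫ - L / 2 * t ^ 2 * ‖v‖ ^ 2
  have hφ' : ∀ t, HasDerivAt φ
      (⟪gradient f (x + t • v), v⟫ - ⟪gradient f x, v⟫ - L * t * ‖v‖ ^ 2) t := by
    intro t
    have hline : HasDerivAt (fun s : ℝ ↦ x + s • v) v t := by
      simpa using ((hasDerivAt_id t).smul_const v).const_add x
    have hf : HasDerivAt (fun s ↦ f (x + s • v)) ⟪gradient f (x + t • v), v⟫ t := by
      have h := (hdiff (x + t • v)).hasGradientAt.hasFDerivAt.comp_hasDerivAt t hline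
      rwa [InnerProductSpace.toDual_apply_apply] at h
    have h := (hf.sub ((hasDerivAt_id t).mul_const ⟪gradient f x, v⟫)).sub
      (((hasDerivAt_pow 2 t).const_mul (L / 2)).mul_const (‖v‖ ^ 2))
    exact h.congr_deriv (by push_cast; ring)
  have hφ'_nonpos : ∀ t ∈ interior (Set.Ici (0 : ℝ)),
      ⟪gradient f (x + t • v), v⟫ - ⟪gradient f x, v⟫ - L * t * ‖v‖ ^ 2 ≤ 0 := by
    intro t ht
    rw [interior_Ici, Set.mem_Ioi] at ht
    have hgrad : ‖gradient f (x + t • v) - gradient f x‖ ≤ L * t * ‖v‖ := by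
      simpa [norm_smul, abs_of_pos ht, mul_assoc] using hlip (x + t • v) x
    refine sub_nonpos.2 ?_
    calc ⟪gradient f (x + t • v), v⟫ - ⟪gradient f x, v⟫
        = ⟪gradient f (x + t • v) - gradient f x, v⟫ := (inner_sub_left ..).symm
      _ ≤ ‖gradient f (x + t • v) - gradient f x‖ * ‖v‖ := real_inner_le_norm ..
      _ ≤ L * t * ‖v‖ * ‖v‖ := by gcongr
      _ = L * t * ‖v‖ ^ 2 := by ring
  have hanti : AntitoneOn φ (Set.Ici 0) :=
    antitoneOn_of_hasDerivWithinAt_nonpos (convex_Ici 0)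
      (fun t _ ↦ (hφ' t).continuousAt.continuousWithinAt)
      (fun t _ ↦ (hφ' t).hasDerivWithinAt) hφ'_nonpos
  have h01 : φ 1 ≤ φ 0 := hanti Set.self_mem_Ici (Set.mem_Ici.2 zero_le_one) zero_le_one
  simp only [φ, zero_smul, add_zero, one_smul, zero_mul, sub_zero, one_mul, one_pow] at h01
  linarith

theorem le_sub_sq_norm_gradient_div_of_lipschitz_gradient (hdiff : Differentiable ℝ f)
    (hlip : ∀ x y, ‖gradient f x - gradient f y‖ ≤ L * ‖x - y‖) (hL : L ≠ 0) (x : E) :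
    f (x - (1 / L) • gradient f x) ≤ f x - ‖gradient f x‖ ^ 2 / (2 * L) := by
  have h := le_add_inner_gradient_add_of_lipschitz_gradient hdiff hlip x (-(1 / L) • gradient f x)
  rw [neg_smul, ← sub_eq_add_neg, inner_neg_right, real_inner_smul_right,
    real_inner_self_eq_norm_sq, norm_neg, norm_smul, mul_pow, Real.norm_eq_abs, sq_abs] at h
  convert h using 1
  field_simp
  ring

end GradientDescent

theorem stmt0 {n : ℕ} (f : EuclideanSpace ℝ (Fin n) → ℝ) (L : ℝ) (hL : 0 < L)
    (hdiff : Differentiable ℝ f)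
    (hlip : ∀ x y, ‖gradient f x - gradient f y‖ ≤ L * ‖x - y‖)
    (xstar : EuclideanSpace ℝ (Fin n)) (hmin : ∀ y, f xstar ≤ f y)
    (x : ℕ → EuclideanSpace ℝ (Fin n))
    (hstep : ∀ k, x (k + 1) = x k - (1 / L) • gradient f (x k)) :
    ∀ N : ℕ, 1 ≤ N → ∃ k < N,
      ‖gradient f (x k)‖ ≤ Real.sqrt (2 * L * (f (x 0) - f xstar) / N) := by
  intro N hN
  have hNpos : (0 : ℝ) < N := by exact_mod_cast hN
  have hdescent (k : ℕ) :
      f (x (k + 1)) ≤ f (x k) - ‖gradient f (x k)‖ ^ 2 / (2 * L) :=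
    hstep k ▸ le_sub_sq_norm_gradient_div_of_lipschitz_gradient hdiff hlip hL.ne' (x k)
  have hsum : ∑ k ∈ range N, ‖gradient f (x k)‖ ^ 2 / (2 * L)
      ≤ ∑ _k ∈ range N, (f (x 0) - f xstar) / N :=
    calc _ ≤ f (x 0) - f (x N) :=
        (sum_le_sum fun k _ ↦ le_sub_comm.1 (hdescent k)).trans_eq (sum_range_sub' _ N)
      _ ≤ f (x 0) - f xstar := by linarith [hmin (x N)]
      _ = _ := by rw [sum_const, card_range, nsmul_eq_mul, mul_div_cancel₀ _ hNpos.ne']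
  obtain ⟨k, hk, hgk⟩ := exists_le_of_sum_le (nonempty_range_iff.2 (by omega)) hsum
  refine ⟨k, mem_range.1 hk, Real.le_sqrt_of_sq_le ?_⟩
  rw [mul_div_assoc]
  exact (div_le_iff₀' (by positivity)).1 hgk
end

section
/- Under L-smoothness and additive gradient noise bounded by Δ, the inexact gradient method x_{k+1} = x_k - (1/L) g̃(x_k) satisfies for all N ≥ 1: min_{0 ≤ k ≤ N-1} ‖∇f(x_k)‖ ≤ sqrt(Δ² + 2L(f(x_0) - f*)/N) ≤ Δ + sqrt(2L(f(x_0) - f*)/N). -/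
/-!
For an `L`-smooth `f`, the descent lemma bounds one step `z ↦ z - (1/L) • u` by
`f z + (‖∇f z - u‖² - ‖∇f z‖²) / (2L)`, so each step of the method satisfies
`‖∇f(x_k)‖² ≤ Δ² + 2L (f(x_k) - f(x_{k+1}))`. Telescoping over `k < N` and using `f ≥ f*` bounds
the average, hence the minimum, of `‖∇f(x_k)‖²` by `Δ² + 2L (f(x_0) - f*) / N`.
-/

open scoped RealInnerProductSpace
open Set

theorem le_add_deriv_add_of_deriv_le {φ φ' : ℝ → ℝ} {C : ℝ} (hφ : ∀ t, HasDerivAt φ (φ' t) t)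
    (hφ' : ∀ t ∈ Ico (0 : ℝ) 1, φ' t ≤ φ' 0 + C * t) :
    φ 1 ≤ φ 0 + φ' 0 + C / 2 := by
  have hB : ∀ t, HasDerivAt (fun t ↦ φ 0 + t * φ' 0 + C / 2 * t ^ 2) (φ' 0 + C * t) t := by
    intro t
    refine ((((hasDerivAt_id t).mul_const (φ' 0)).const_add (φ 0)).add
      ((hasDerivAt_pow 2 t).const_mul (C / 2))).congr_deriv ?_
    simp only [Nat.cast_ofNat]
    ring
  have := image_le_of_deriv_right_le_deriv_boundary (a := 0) (b := 1)
    (fun t _ ↦ (hφ t).continuousAt.continuousWithinAt) (fun t _ ↦ (hφ t).hasDerivWithinAt)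
    (by simp) (fun t _ ↦ (hB t).continuousAt.continuousWithinAt)
    (fun t _ ↦ (hB t).hasDerivWithinAt) hφ' (right_mem_Icc.2 zero_le_one)
  simpa using this

variable {E : Type*} [NormedAddCommGroup E] [InnerProductSpace ℝ E] [CompleteSpace E]

theorem image_le_add_inner_gradient_add_sq {f : E → ℝ} {L : ℝ} (hf : Differentiable ℝ f)
    (hlip : ∀ x y, ‖gradient f x - gradient f y‖ ≤ L * ‖x - y‖) (x y : E) :
    f y ≤ f x + ⟪gradient f x, y - x⟫ + L / 2 * ‖y - x‖ ^ 2 := by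
  have hφ : ∀ t : ℝ, HasDerivAt (fun t ↦ f (x + t • (y - x)))
      ⟪gradient f (x + t • (y - x)), y - x⟫ t := by
    intro t
    have hline : HasDerivAt (fun t : ℝ ↦ x + t • (y - x)) (y - x) t := by
      simpa using ((hasDerivAt_id t).smul_const (y - x)).const_add x
    simpa only [Function.comp_def, InnerProductSpace.toDual_apply_apply] using
      (hf _).hasGradientAt.hasFDerivAt.comp_hasDerivAt t hline
  have := le_add_deriv_add_of_deriv_le hφ (C := L * ‖y - x‖ ^ 2) fun t ht ↦ by
    have hdiff : ‖gradient f (x + t • (y - x)) - gradient f x‖ ≤ L * (t * ‖y - x‖) := by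
      simpa [norm_smul, abs_of_nonneg ht.1] using hlip (x + t • (y - x)) x
    calc ⟪gradient f (x + t • (y - x)), y - x⟫
        = ⟪gradient f x, y - x⟫ + ⟪gradient f (x + t • (y - x)) - gradient f x, y - x⟫ := by
          rw [inner_sub_left]; ring
      _ ≤ ⟪gradient f x, y - x⟫ + L * (t * ‖y - x‖) * ‖y - x‖ := by
          gcongr
          exact (real_inner_le_norm _ _).trans (by gcongr)
      _ = _ := by rw [zero_smul, add_zero]; ring
  simp only [one_smul, zero_smul, add_zero, add_sub_cancel] at this
  linarith

theorem image_sub_one_div_smul_le {f : E → ℝ} {L : ℝ} (hL : 0 < L) (hf : Differentiable ℝ f)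
    (hlip : ∀ x y, ‖gradient f x - gradient f y‖ ≤ L * ‖x - y‖) (z u : E) :
    f (z - (1 / L) • u) ≤ f z + (‖gradient f z - u‖ ^ 2 - ‖gradient f z‖ ^ 2) / (2 * L) := by
  have h := image_le_add_inner_gradient_add_sq hf hlip z (z - (1 / L) • u)
  rw [sub_sub_cancel_left, norm_neg, norm_smul, inner_neg_right, real_inner_smul_right,
    Real.norm_of_nonneg (by positivity)] at h
  rw [norm_sub_sq_real]
  field_simp at h ⊢
  nlinarith

theorem exists_lt_le_add_div_of_le_sub_succ {a Φ : ℕ → ℝ} {c m : ℝ} {N : ℕ} (hN : 0 < N)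
    (hstep : ∀ k, a k ≤ c + (Φ k - Φ (k + 1))) (hm : m ≤ Φ N) :
    ∃ k < N, a k ≤ c + (Φ 0 - m) / N := by
  have hsum : ∑ k ∈ Finset.range N, a k ≤ ∑ k ∈ Finset.range N, (c + (Φ 0 - m) / N) := by
    calc ∑ k ∈ Finset.range N, a k ≤ ∑ k ∈ Finset.range N, (c + (Φ k - Φ (k + 1))) :=
          Finset.sum_le_sum fun k _ ↦ hstep k
      _ = N * c + (Φ 0 - Φ N) := by
          rw [Finset.sum_add_distrib, Finset.sum_range_sub']; simp
      _ ≤ N * c + (Φ 0 - m) := by linarith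
      _ = _ := by
          have : (N : ℝ) ≠ 0 := Nat.cast_ne_zero.2 hN.ne'
          simp [mul_div_cancel₀ _ this]
  simpa using Finset.exists_le_of_sum_le (Finset.nonempty_range_iff.2 hN.ne') hsum

theorem Real.sqrt_sq_add_le {a b : ℝ} (ha : 0 ≤ a) (hb : 0 ≤ b) : √(a ^ 2 + b) ≤ a + √b :=
  Real.sqrt_le_iff.2 ⟨by positivity, by nlinarith [Real.sq_sqrt hb, Real.sqrt_nonneg b]⟩

theorem stmt4_general {n : ℕ} (f : EuclideanSpace ℝ (Fin n) → ℝ) (L Δ fstar : ℝ)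
    (hL : 0 < L) (hΔ : 0 ≤ Δ)
    (hdiff : Differentiable ℝ f)
    (hlip : ∀ x y, ‖gradient f x - gradient f y‖ ≤ L * ‖x - y‖)
    (hmin : ∀ y, fstar ≤ f y)
    (gt : EuclideanSpace ℝ (Fin n) → EuclideanSpace ℝ (Fin n))
    (herr : ∀ z, ‖gradient f z - gt z‖ ≤ Δ)
    (x : ℕ → EuclideanSpace ℝ (Fin n))
    (hstep : ∀ k, x (k + 1) = x k - (1 / L) • gt (x k)) :
    ∀ N : ℕ, 1 ≤ N →
      (∃ k < N, ‖gradient f (x k)‖ ≤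
        Real.sqrt (Δ ^ 2 + 2 * L * (f (x 0) - fstar) / N)) ∧
      Real.sqrt (Δ ^ 2 + 2 * L * (f (x 0) - fstar) / N) ≤
        Δ + Real.sqrt (2 * L * (f (x 0) - fstar) / N) := by
  intro N hN
  have hdescent : ∀ k,
      ‖gradient f (x k)‖ ^ 2 ≤ Δ ^ 2 + (2 * L * f (x k) - 2 * L * f (x (k + 1))) := by
    intro k
    have h := image_sub_one_div_smul_le hL hdiff hlip (x k) (gt (x k))
    rw [← hstep] at h
    field_simp at h
    nlinarith [pow_le_pow_left₀ (norm_nonneg _) (herr (x k)) 2]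
  obtain ⟨k, hkN, hk⟩ := exists_lt_le_add_div_of_le_sub_succ hN hdescent
    (mul_le_mul_of_nonneg_left (hmin (x N)) (by positivity))
  have hgap : 0 ≤ 2 * L * (f (x 0) - fstar) / N := by
    have := hmin (x 0); positivity
  refine ⟨⟨k, hkN, Real.le_sqrt_of_sq_le ?_⟩, ?_⟩
  · convert hk using 3; ring
  · exact Real.sqrt_sq_add_le hΔ hgap

theorem stmt4 {n : ℕ} (f : EuclideanSpace ℝ (Fin n) → ℝ) (L Δ fstar : ℝ)
    (hL : 0 < L) (hΔ : 0 ≤ Δ)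
    (hdiff : Differentiable ℝ f)
    (hlip : ∀ x y, ‖gradient f x - gradient f y‖ ≤ L * ‖x - y‖)
    (xstar : EuclideanSpace ℝ (Fin n)) (hfstar : f xstar = fstar)
    (hmin : ∀ y, fstar ≤ f y)
    (gt : EuclideanSpace ℝ (Fin n) → EuclideanSpace ℝ (Fin n))
    (herr : ∀ z, ‖gradient f z - gt z‖ ≤ Δ)
    (x : ℕ → EuclideanSpace ℝ (Fin n))
    (hstep : ∀ k, x (k + 1) = x k - (1 / L) • gt (x k)) :
    ∀ N : ℕ, 1 ≤ N →
      (∃ k < N, ‖gradient f (x k)‖ ≤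
        Real.sqrt (Δ ^ 2 + 2 * L * (f (x 0) - fstar) / N)) ∧
      Real.sqrt (Δ ^ 2 + 2 * L * (f (x 0) - fstar) / N) ≤
        Δ + Real.sqrt (2 * L * (f (x 0) - fstar) / N) :=
  stmt4_general f L Δ fstar hL hΔ hdiff hlip hmin gt herr x hstep
end

section
/- If f is L-smooth, satisfies the PL condition with constant μ, and the inexact gradient method x_{k+1} = x_k - (1/L) g̃(x_k) is run with gradient error bounded by Δ, then f(x_{k+1}) - f* ≤ (1 - μ/L)^{k+1} (f(x_0) - f*) + Δ²/(2μ) for all k ≥ 0. -/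
/-!
By the descent lemma for an `L`-smooth `f`, the step `x⁺ = x - L⁻¹ g` satisfies
`f x⁺ ≤ f x - (‖∇f x‖² - ‖∇f x - g‖²) / (2L)`. The PL inequality turns the decrease
`‖∇f x‖² / (2L)` into `(μ/L) (f x - f*)`, and the error costs at most
`Δ² / (2L) = (μ/L) · Δ² / (2μ)`. Hence `f x_k - f* - Δ² / (2μ)` contracts by the factor
`1 - μ/L` at every step.
-/

open scoped RealInnerProductSpace

section Descent

variable {E : Type*} [NormedAddCommGroup E] [InnerProductSpace ℝ E] [CompleteSpace E]
  {f : E → ℝ} {L : ℝ}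

theorem hasDerivAt_comp_add_smul {x v : E} {t : ℝ} (hf : DifferentiableAt ℝ f (x + t • v)) :
    HasDerivAt (fun s : ℝ => f (x + s • v)) ⟪gradient f (x + t • v), v⟫ t := by
  have hline : HasDerivAt (fun s : ℝ => x + s • v) v t := by
    simpa using ((hasDerivAt_id t).smul_const v).const_add x
  simpa [Function.comp_def] using hf.hasGradientAt.hasFDerivAt.comp_hasDerivAt t hline

theorem inner_gradient_add_smul_le (hlip : ∀ x y, ‖gradient f x - gradient f y‖ ≤ L * ‖x - y‖)
    (x v : E) {t : ℝ} (ht : 0 ≤ t) :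
    ⟪gradient f (x + t • v), v⟫ ≤ ⟪gradient f x, v⟫ + L * t * ‖v‖ ^ 2 := by
  have h := calc ⟪gradient f (x + t • v) - gradient f x, v⟫
      ≤ ‖gradient f (x + t • v) - gradient f x‖ * ‖v‖ := real_inner_le_norm _ _
    _ ≤ L * ‖(x + t • v) - x‖ * ‖v‖ := by gcongr; exact hlip _ _
    _ = L * t * ‖v‖ ^ 2 := by
      simp only [add_sub_cancel_left, norm_smul, Real.norm_eq_abs, abs_of_nonneg ht]; ring
  rw [inner_sub_left] at h
  linarith

theorem le_add_inner_gradient_add_sq_of_lipschitz (hf : Differentiable ℝ f)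
    (hlip : ∀ x y, ‖gradient f x - gradient f y‖ ≤ L * ‖x - y‖) (x y : E) :
    f y ≤ f x + ⟪gradient f x, y - x⟫ + L / 2 * ‖y - x‖ ^ 2 := by
  set v := y - x
  have hφ (t : ℝ) := hasDerivAt_comp_add_smul (v := v) (hf (x + t • v))
  have hB (t : ℝ) :
      HasDerivAt (fun s : ℝ => f x + s * ⟪gradient f x, v⟫ + L / 2 * s ^ 2 * ‖v‖ ^ 2)
        (⟪gradient f x, v⟫ + L * t * ‖v‖ ^ 2) t := by
    have := (((hasDerivAt_id' t).mul_const ⟪gradient f x, v⟫).const_add (f x)).fun_add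
      (((hasDerivAt_pow 2 t).const_mul (L / 2)).mul_const (‖v‖ ^ 2))
    exact this.congr_deriv (by ring)
  have := image_le_of_deriv_right_le_deriv_boundary (a := 0) (b := 1)
    (fun t _ => (hφ t).continuousAt.continuousWithinAt) (fun t _ => (hφ t).hasDerivWithinAt)
    (by simp) (fun t _ => (hB t).continuousAt.continuousWithinAt)
    (fun t _ => (hB t).hasDerivWithinAt)
    (fun t ht => inner_gradient_add_smul_le hlip x v ht.1) (Set.right_mem_Icc.2 zero_le_one)
  simpa [v] using this

theorem le_sub_of_inexact_gradient_step (hf : Differentiable ℝ f)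
    (hlip : ∀ x y, ‖gradient f x - gradient f y‖ ≤ L * ‖x - y‖) (hL : L ≠ 0) (x g : E) :
    f (x - L⁻¹ • g) ≤ f x - (‖gradient f x‖ ^ 2 - ‖gradient f x - g‖ ^ 2) / (2 * L) := by
  have h := le_add_inner_gradient_add_sq_of_lipschitz hf hlip x (x - L⁻¹ • g)
  have hstep : ⟪gradient f x, -(L⁻¹ • g)⟫ + L / 2 * ‖-(L⁻¹ • g)‖ ^ 2 =
      -((‖gradient f x‖ ^ 2 - ‖gradient f x - g‖ ^ 2) / (2 * L)) := by
    rw [inner_neg_right, real_inner_smul_right, norm_neg, norm_smul, Real.norm_eq_abs, mul_pow,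
      sq_abs, norm_sub_sq_real]
    field_simp
    ring
  rw [sub_sub_cancel_left] at h
  linarith

theorem sub_le_of_inexact_gradient_step_of_PL (hf : Differentiable ℝ f)
    (hlip : ∀ x y, ‖gradient f x - gradient f y‖ ≤ L * ‖x - y‖) {μ Δ fstar : ℝ} (hμ : 0 < μ)
    (hL : 0 < L) {x g : E} (hPL : f x - fstar ≤ 1 / (2 * μ) * ‖gradient f x‖ ^ 2)
    (herr : ‖gradient f x - g‖ ≤ Δ) :
    f (x - L⁻¹ • g) - fstar - Δ ^ 2 / (2 * μ) ≤
      (1 - μ / L) * (f x - fstar - Δ ^ 2 / (2 * μ)) := by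
  have hdescent := le_sub_of_inexact_gradient_step hf hlip hL.ne' x g
  have hdecrease : μ / L * (f x - fstar) ≤ ‖gradient f x‖ ^ 2 / (2 * L) :=
    calc μ / L * (f x - fstar) ≤ μ / L * (1 / (2 * μ) * ‖gradient f x‖ ^ 2) := by gcongr
      _ = ‖gradient f x‖ ^ 2 / (2 * L) := by field_simp
  have herr_sq : ‖gradient f x - g‖ ^ 2 / (2 * L) ≤ Δ ^ 2 / (2 * L) := by gcongr
  have hsplit : Δ ^ 2 / (2 * L) = μ / L * (Δ ^ 2 / (2 * μ)) := by field_simp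
  rw [sub_div] at hdescent
  linarith

end Descent

theorem stmt5_general {n : ℕ} (f : EuclideanSpace ℝ (Fin n) → ℝ) (L μ Δ fstar : ℝ)
    (hμ : 0 < μ) (hμL : μ ≤ L)
    (hdiff : Differentiable ℝ f)
    (hlip : ∀ x y, ‖gradient f x - gradient f y‖ ≤ L * ‖x - y‖)
    (hPL : ∀ z, f z - fstar ≤ (1 / (2 * μ)) * ‖gradient f z‖ ^ 2)
    (gt : EuclideanSpace ℝ (Fin n) → EuclideanSpace ℝ (Fin n))
    (herr : ∀ z, ‖gradient f z - gt z‖ ≤ Δ)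
    (x : ℕ → EuclideanSpace ℝ (Fin n))
    (hstep : ∀ k, x (k + 1) = x k - (1 / L) • gt (x k)) :
    ∀ k : ℕ, f (x (k + 1)) - fstar ≤
      (1 - μ / L) ^ (k + 1) * (f (x 0) - fstar) + Δ ^ 2 / (2 * μ) := by
  have hL : 0 < L := hμ.trans_le hμL
  have hq : 0 ≤ 1 - μ / L := sub_nonneg.2 ((div_le_one hL).2 hμL)
  intro k
  have hgeom := le_geom (u := fun j => f (x j) - fstar - Δ ^ 2 / (2 * μ)) hq (k + 1)
    fun j _ => by
      rw [hstep j, one_div]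
      exact sub_le_of_inexact_gradient_step_of_PL hdiff hlip hμ hL (hPL _) (herr _)
  have hoffset : 0 ≤ (1 - μ / L) ^ (k + 1) * (Δ ^ 2 / (2 * μ)) := by positivity
  linarith

theorem stmt5 {n : ℕ} (f : EuclideanSpace ℝ (Fin n) → ℝ) (L μ Δ fstar : ℝ)
    (hμ : 0 < μ) (hμL : μ ≤ L) (hΔ : 0 ≤ Δ)
    (hdiff : Differentiable ℝ f)
    (hlip : ∀ x y, ‖gradient f x - gradient f y‖ ≤ L * ‖x - y‖)
    (xstar : EuclideanSpace ℝ (Fin n)) (hfstar : f xstar = fstar)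
    (hmin : ∀ y, fstar ≤ f y)
    (hPL : ∀ z, f z - fstar ≤ (1 / (2 * μ)) * ‖gradient f z‖ ^ 2)
    (gt : EuclideanSpace ℝ (Fin n) → EuclideanSpace ℝ (Fin n))
    (herr : ∀ z, ‖gradient f z - gt z‖ ≤ Δ)
    (x : ℕ → EuclideanSpace ℝ (Fin n))
    (hstep : ∀ k, x (k + 1) = x k - (1 / L) • gt (x k)) :
    ∀ k : ℕ, f (x (k + 1)) - fstar ≤
      (1 - μ / L) ^ (k + 1) * (f (x 0) - fstar) + Δ ^ 2 / (2 * μ) :=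
  stmt5_general f L μ Δ fstar hμ hμL hdiff hlip hPL gt herr x hstep
end

section
/- For N = ⌈(L/μ) ln(μ(f(x_0) − f*)/(6Δ²))⌉ iterations of the inexact gradient method with step 1/L on an L-smooth PL function, one has (1 − μ/L)^N (f(x_0) − f*) ≤ 6Δ²/μ and hence f(x_N) − f* ≤ 7Δ²/μ. -/
/-! The contraction factor `(1 - μ/L)^N` is at most `exp (-μN/L)`, and `N` is chosen so that this
exponential is at most the ratio `6Δ²/(μ(f(x₀) - f*))`; the remaining `Δ²/(2μ)` of the error
bound is absorbed into one more `Δ²/μ`. -/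

open Real

lemma one_sub_pow_le_exp_neg_mul {c : ℝ} (hc : c ≤ 1) (N : ℕ) :
    (1 - c) ^ N ≤ exp (-(c * N)) :=
  calc (1 - c) ^ N ≤ exp (-c) ^ N := pow_le_pow_left₀ (by linarith) (one_sub_le_exp_neg c) N
    _ = exp (-(c * N)) := by rw [← exp_nat_mul]; ring_nf

lemma one_sub_pow_mul_le_of_inv_mul_log_le {c G ε : ℝ} (hc₀ : 0 < c) (hc₁ : c ≤ 1)
    (hG : 0 < G) (hε : 0 < ε) {N : ℕ} (hN : c⁻¹ * log (G / ε) ≤ N) :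
    (1 - c) ^ N * G ≤ ε := by
  have hlog : log (G / ε) ≤ c * N := by
    rwa [inv_mul_le_iff₀ hc₀] at hN
  calc (1 - c) ^ N * G ≤ exp (-(c * N)) * G :=
        mul_le_mul_of_nonneg_right (one_sub_pow_le_exp_neg_mul hc₁ N) hG.le
    _ ≤ exp (-log (G / ε)) * G := by gcongr
    _ = ε := by rw [exp_neg, exp_log (by positivity), inv_div, div_mul_cancel₀ _ hG.ne']

open scoped RealInnerProductSpace

theorem stmt10 {n : ℕ} (f : EuclideanSpace ℝ (Fin n) → ℝ) (L μ Δ fstar : ℝ)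
    (hμ : 0 < μ) (hμL : μ ≤ L) (hΔ : 0 < Δ)
    (x : ℕ → EuclideanSpace ℝ (Fin n))
    (hgap : 6 * Δ ^ 2 < μ * (f (x 0) - fstar))
    (hconv : ∀ k : ℕ, f (x k) - fstar ≤
      (1 - μ / L) ^ k * (f (x 0) - fstar) + Δ ^ 2 / (2 * μ))
    (N : ℕ)
    (hN : N = ⌈(L / μ) * Real.log (μ * (f (x 0) - fstar) / (6 * Δ ^ 2))⌉₊) :
    (1 - μ / L) ^ N * (f (x 0) - fstar) ≤ 6 * Δ ^ 2 / μ ∧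
    f (x N) - fstar ≤ 7 * Δ ^ 2 / μ := by
  have hL : 0 < L := hμ.trans_le hμL
  have hgap₀ : 0 < f (x 0) - fstar := by nlinarith
  have hcontract : (1 - μ / L) ^ N * (f (x 0) - fstar) ≤ 6 * Δ ^ 2 / μ := by
    refine one_sub_pow_mul_le_of_inv_mul_log_le (by positivity) ((div_le_one hL).2 hμL)
      hgap₀ (by positivity) ?_
    rw [hN, inv_div, div_div_eq_mul_div, mul_comm μ]
    exact Nat.le_ceil _
  refine ⟨hcontract, ?_⟩
  have hhalf : Δ ^ 2 / (2 * μ) ≤ Δ ^ 2 / μ := by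
    gcongr; linarith
  calc f (x N) - fstar ≤ 6 * Δ ^ 2 / μ + Δ ^ 2 / μ := by linarith [hconv N]
    _ = 7 * Δ ^ 2 / μ := by ring
end

section
/- Summing the per-step bounds, the inexact gradient method stopped after N iterations satisfies ‖x_N − x_0‖ ≤ 2NΔ√(1/L² + 1/(μL)) + (4/μ)√(L(f(x_0) − f*)), using that Σ_{k=0}^{∞} (1 − μ/L)^{k/2} ≤ 2L/μ. -/
/-!
Each step length is bounded by a constant error term plus a geometrically decaying term
`2 ρ^k √((f x₀ - f*)/L)` with `ρ = √(1 - μ/L)`. By the triangle inequality `‖x_N - x_0‖` is at most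
the sum of the step lengths; the error terms add up to `N` times the constant, and since
`ρ ≤ 1 - μ/(2L)` the geometric part sums to at most `1/(1 - ρ) ≤ 2L/μ`.
-/

open Finset

lemma sqrt_one_sub_le_one_sub_half {t : ℝ} (ht : t ≤ 2) : √(1 - t) ≤ 1 - t / 2 :=
  Real.sqrt_le_iff.2 ⟨by linarith, by nlinarith [sq_nonneg t]⟩

lemma sum_range_sqrt_one_sub_pow_le {t : ℝ} (ht0 : 0 < t) (ht1 : t ≤ 1) (N : ℕ) :
    ∑ k ∈ range N, √((1 - t) ^ k) ≤ 2 / t := by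
  set ρ := √(1 - t)
  have hρ : ρ ≤ 1 - t / 2 := sqrt_one_sub_le_one_sub_half (by linarith)
  have hsqrt_pow (k : ℕ) : √((1 - t) ^ k) = ρ ^ k := by
    rw [← Real.sqrt_sq (pow_nonneg (Real.sqrt_nonneg _) k), ← pow_mul, mul_comm, pow_mul,
      Real.sq_sqrt (by linarith)]
  calc ∑ k ∈ range N, √((1 - t) ^ k) = ∑ k ∈ Ico 0 N, ρ ^ k := by
        simp only [hsqrt_pow, range_eq_Ico]
    _ ≤ ρ ^ 0 / (1 - ρ) := geom_sum_Ico_le_of_lt_one (Real.sqrt_nonneg _) (by linarith)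
    _ ≤ 2 / t := by
        rw [pow_zero, div_le_div_iff₀ (by linarith) ht0]
        linarith

lemma norm_sub_le_of_norm_succ_sub_le {E : Type*} [SeminormedAddCommGroup E] (x : ℕ → E)
    {a b R : ℝ} {r : ℕ → ℝ} (hb : 0 ≤ b) (hstep : ∀ k, ‖x (k + 1) - x k‖ ≤ a + b * r k)
    {N : ℕ} (hR : ∑ k ∈ range N, r k ≤ R) :
    ‖x N - x 0‖ ≤ N * a + b * R :=
  calc ‖x N - x 0‖ ≤ ∑ k ∈ range N, ‖x (k + 1) - x k‖ := by
        simpa only [dist_eq_norm, norm_sub_rev] using dist_le_range_sum_dist x N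
    _ ≤ ∑ k ∈ range N, (a + b * r k) := sum_le_sum fun k _ => hstep k
    _ = N * a + b * ∑ k ∈ range N, r k := by
        rw [sum_add_distrib, sum_const, card_range, nsmul_eq_mul, mul_sum]
    _ ≤ N * a + b * R := by gcongr

lemma mul_sqrt_div_eq_sqrt_mul {L : ℝ} (hL : 0 < L) (D : ℝ) : L * √(D / L) = √(L * D) :=
  calc L * √(D / L) = √(L ^ 2) * √(D / L) := by rw [Real.sqrt_sq hL.le]
    _ = √(L ^ 2 * (D / L)) := (Real.sqrt_mul (sq_nonneg L) _).symm
    _ = √(L * D) := by congr 1; field_simp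

theorem stmt11_general {n : ℕ} (f : EuclideanSpace ℝ (Fin n) → ℝ) (L μ Δ fstar : ℝ)
    (hμ : 0 < μ) (hμL : μ ≤ L)
    (x : ℕ → EuclideanSpace ℝ (Fin n))
    (hdist : ∀ k : ℕ, ‖x (k + 1) - x k‖ ≤
      2 * Δ * Real.sqrt (1 / L ^ 2 + 1 / (μ * L)) +
      2 * Real.sqrt ((1 - μ / L) ^ k) * Real.sqrt ((f (x 0) - fstar) / L)) :
    ∀ N : ℕ, ‖x N - x 0‖ ≤
      2 * N * Δ * Real.sqrt (1 / L ^ 2 + 1 / (μ * L)) +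
      (4 / μ) * Real.sqrt (L * (f (x 0) - fstar)) := by
  intro N
  have hL : 0 < L := hμ.trans_le hμL
  have hgeom := sum_range_sqrt_one_sub_pow_le (div_pos hμ hL) ((div_le_one hL).2 hμL) N
  calc ‖x N - x 0‖ ≤ N * (2 * Δ * √(1 / L ^ 2 + 1 / (μ * L))) +
        2 * √((f (x 0) - fstar) / L) * (2 / (μ / L)) :=
        norm_sub_le_of_norm_succ_sub_le x (by positivity) (fun k => (hdist k).trans_eq (by ring))
          hgeom
    _ = 2 * N * Δ * √(1 / L ^ 2 + 1 / (μ * L)) +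
        4 / μ * (L * √((f (x 0) - fstar) / L)) := by
        field_simp
        ring
    _ = _ := by rw [mul_sqrt_div_eq_sqrt_mul hL]

theorem stmt11 {n : ℕ} (f : EuclideanSpace ℝ (Fin n) → ℝ) (L μ Δ fstar : ℝ)
    (hμ : 0 < μ) (hμL : μ ≤ L) (hΔ : 0 ≤ Δ)
    (hmin : ∀ y, fstar ≤ f y)
    (x : ℕ → EuclideanSpace ℝ (Fin n))
    (hdist : ∀ k : ℕ, ‖x (k + 1) - x k‖ ≤
      2 * Δ * Real.sqrt (1 / L ^ 2 + 1 / (μ * L)) +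
      2 * Real.sqrt ((1 - μ / L) ^ k) * Real.sqrt ((f (x 0) - fstar) / L)) :
    ∀ N : ℕ, ‖x N - x 0‖ ≤
      2 * N * Δ * Real.sqrt (1 / L ^ 2 + 1 / (μ * L)) +
      (4 / μ) * Real.sqrt (L * (f (x 0) - fstar)) :=
  stmt11_general f L μ Δ fstar hμ hμL x hdist
end

section
/- If at iteration k the adaptive step x_{k+1} = x_k − (1/(2L_k)) g̃(x_k) and the acceptance condition f̃(x_{k+1}) ≤ f̃(x_k) + ⟨g̃(x_k), x_{k+1}−x_k⟩ + L_k‖x_{k+1}−x_k‖² + Δ²/(2L_k) + 2δ hold, together with |f − f̃| ≤ δ, then f(x_{k+1}) − f(x_k) ≤ Δ²/(2L_k) − ‖g̃(x_k)‖²/(4L_k) + 4δ. -/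
/-!
The step `x_{k+1} = x_k - (2 L_k)⁻¹ • g̃(x_k)` minimises the quadratic model
`⟪g̃, d⟫ + L_k ‖d‖²` over `d`, with minimum value `-‖g̃‖² / (4 L_k)`, so the acceptance test
certifies that much decrease of `f̃`. Passing from `f̃` back to `f` at the two iterates costs `2δ`.
-/

open scoped RealInnerProductSpace

section GradientStep

variable {E : Type*} [NormedAddCommGroup E] [InnerProductSpace ℝ E]

theorem inner_add_mul_norm_sq_of_eq_sub_smul {x y g : E} {t : ℝ} (L : ℝ) (h : y = x - t • g) :
    ⟪g, y - x⟫ + L * ‖y - x‖ ^ 2 = (L * t ^ 2 - t) * ‖g‖ ^ 2 := by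
  have hd : y - x = -(t • g) := by rw [h]; abel
  rw [hd, inner_neg_right, real_inner_smul_right, real_inner_self_eq_norm_sq, norm_neg,
    norm_smul, mul_pow, Real.norm_eq_abs, sq_abs]
  ring

end GradientStep

theorem sub_le_sub_add_two_mul_of_abs_sub_le {α : Type*} {f g : α → ℝ} {δ : ℝ}
    (h : ∀ z, |f z - g z| ≤ δ) (x y : α) : f y - f x ≤ g y - g x + 2 * δ := by
  have hy := (abs_le.1 (h y)).2
  have hx := (abs_le.1 (h x)).1
  linarith

theorem stmt15_general {n : ℕ} (f ft : EuclideanSpace ℝ (Fin n) → ℝ) (Lk Δ δ : ℝ)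
    (hLk : 0 < Lk)
    (gt : EuclideanSpace ℝ (Fin n) → EuclideanSpace ℝ (Fin n))
    (herr : ∀ z, |f z - ft z| ≤ δ)
    (xk xk1 : EuclideanSpace ℝ (Fin n))
    (hstep : xk1 = xk - (1 / (2 * Lk)) • gt xk)
    (haccept : ft xk1 ≤ ft xk + ⟪gt xk, xk1 - xk⟫ +
      Lk * ‖xk1 - xk‖ ^ 2 + Δ ^ 2 / (2 * Lk) + 2 * δ) :
    f xk1 - f xk ≤ Δ ^ 2 / (2 * Lk) - ‖gt xk‖ ^ 2 / (4 * Lk) + 4 * δ := by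
  have hmodel := inner_add_mul_norm_sq_of_eq_sub_smul Lk hstep
  have hmin : (Lk * (1 / (2 * Lk)) ^ 2 - 1 / (2 * Lk)) * ‖gt xk‖ ^ 2
      = -(‖gt xk‖ ^ 2 / (4 * Lk)) := by
    field_simp
    ring
  have htransfer := sub_le_sub_add_two_mul_of_abs_sub_le herr xk xk1
  linarith

theorem stmt15 {n : ℕ} (f ft : EuclideanSpace ℝ (Fin n) → ℝ) (Lk Δ δ : ℝ)
    (hLk : 0 < Lk) (hΔ : 0 ≤ Δ) (hδ : 0 ≤ δ)
    (gt : EuclideanSpace ℝ (Fin n) → EuclideanSpace ℝ (Fin n))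
    (herr : ∀ z, |f z - ft z| ≤ δ)
    (xk xk1 : EuclideanSpace ℝ (Fin n))
    (hstep : xk1 = xk - (1 / (2 * Lk)) • gt xk)
    (haccept : ft xk1 ≤ ft xk + ⟪gt xk, xk1 - xk⟫ +
      Lk * ‖xk1 - xk‖ ^ 2 + Δ ^ 2 / (2 * Lk) + 2 * δ) :
    f xk1 - f xk ≤ Δ ^ 2 / (2 * Lk) - ‖gt xk‖ ^ 2 / (4 * Lk) + 4 * δ :=
  stmt15_general f ft Lk Δ δ hLk gt herr xk xk1 hstep haccept
end

section
/- For the adaptive inexact gradient method on a μ-PL function with L_k ≤ 2L, 16Lδ ≤ Δ², and per-step bound f(x_{k+1}) − f* ≤ (1 − μ/(4L_k))(f(x_k) − f*) + Δ²/(2L_k) + 2δ, one obtains f(x_{k+1}) − f* ≤ (1 − μ/(8L))^{k+1}(f(x_0) − f*) + 4Δ²/μ. -/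
/-!
With `a k = μ / (4 L_k) ∈ [μ / (8L), 1]` and `C = 4Δ² / μ`, the noise of one step is at most
`Δ² / L_k = a k * C`, so the gap `e k = f (x k) - f*` satisfies `e (k+1) ≤ (1 - a k) e k + a k C`.
Each step pulls the excess `e k - C` towards `0` by the factor `1 - a k ≤ 1 - μ / (8L)`.
-/

theorem le_one_sub_pow_mul_add_of_le_convex_comb {e a : ℕ → ℝ} {r C : ℝ}
    (he₀ : 0 ≤ e 0) (hC : 0 ≤ C) (hr : ∀ k, r ≤ a k) (ha : ∀ k, a k ≤ 1)
    (hstep : ∀ k, e (k + 1) ≤ (1 - a k) * e k + a k * C) :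
    ∀ k, e k ≤ (1 - r) ^ k * e 0 + C := by
  have hr₁ : 0 ≤ 1 - r := by linarith [hr 0, ha 0]
  intro k
  induction k with
  | zero => simpa using hC
  | succ k ih =>
    have hak : 0 ≤ 1 - a k := by linarith [ha k]
    have hgeom : 0 ≤ (1 - r) ^ k * e 0 := mul_nonneg (pow_nonneg hr₁ k) he₀
    calc e (k + 1) ≤ (1 - a k) * e k + a k * C := hstep k
      _ ≤ (1 - a k) * ((1 - r) ^ k * e 0 + C) + a k * C := by gcongr
      _ = (1 - a k) * ((1 - r) ^ k * e 0) + C := by ring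
      _ ≤ (1 - r) * ((1 - r) ^ k * e 0) + C := by gcongr; linarith [hr k]
      _ = (1 - r) ^ (k + 1) * e 0 + C := by ring

theorem sq_div_two_mul_add_two_mul_le_sq_div {Δ δ l L : ℝ} (hl : 0 < l) (hlL : l ≤ 2 * L)
    (hnoise : 16 * L * δ ≤ Δ ^ 2) :
    Δ ^ 2 / (2 * l) + 2 * δ ≤ Δ ^ 2 / l := by
  have hδ : 2 * δ ≤ Δ ^ 2 / (4 * l) := by
    rw [le_div_iff₀ (by positivity)]
    nlinarith [sq_nonneg Δ]
  calc Δ ^ 2 / (2 * l) + 2 * δ ≤ Δ ^ 2 / (2 * l) + Δ ^ 2 / (4 * l) := by gcongr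
    _ ≤ Δ ^ 2 / l := by
      rw [div_add_div _ _ (by positivity) (by positivity), div_le_div_iff₀ (by positivity) hl]
      nlinarith [sq_nonneg Δ, mul_pos hl hl]

theorem stmt18_general {n : ℕ} (f : EuclideanSpace ℝ (Fin n) → ℝ) (L Lmin μ Δ δ fstar : ℝ)
    (hμ : 0 < μ)
    (hLmin : μ / 4 ≤ Lmin)
    (hmin : ∀ y, fstar ≤ f y)
    (hnoise : 16 * L * δ ≤ Δ ^ 2)
    (Lk : ℕ → ℝ) (hLklb : ∀ k, Lmin ≤ Lk k) (hLkub : ∀ k, Lk k ≤ 2 * L)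
    (x : ℕ → EuclideanSpace ℝ (Fin n))
    (hdec : ∀ k, f (x (k + 1)) - fstar ≤
      (1 - μ / (4 * Lk k)) * (f (x k) - fstar) + Δ ^ 2 / (2 * Lk k) + 2 * δ) :
    ∀ k : ℕ, f (x (k + 1)) - fstar ≤
      (1 - μ / (8 * L)) ^ (k + 1) * (f (x 0) - fstar) + 4 * Δ ^ 2 / μ := by
  have hLk : ∀ k, μ / 4 ≤ Lk k := fun k => hLmin.trans (hLklb k)
  have hLk_pos : ∀ k, 0 < Lk k := fun k => by linarith [hLk k]
  intro k
  refine le_one_sub_pow_mul_add_of_le_convex_comb (e := fun k => f (x k) - fstar)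
    (a := fun k => μ / (4 * Lk k)) (sub_nonneg.2 (hmin _)) (by positivity)
    (fun k => ?_) (fun k => ?_) (fun k => ?_) (k + 1)
  · exact div_le_div_of_nonneg_left hμ.le (by linarith [hLk_pos k]) (by linarith [hLkub k])
  · rw [div_le_one (by linarith [hLk_pos k])]
    linarith [hLk k]
  · have hnoise_k : μ / (4 * Lk k) * (4 * Δ ^ 2 / μ) = Δ ^ 2 / Lk k := by
      field_simp
    have hstep_noise := sq_div_two_mul_add_two_mul_le_sq_div (hLk_pos k) (hLkub k) hnoise
    linarith [hdec k]

theorem stmt18 {n : ℕ} (f : EuclideanSpace ℝ (Fin n) → ℝ) (L Lmin μ Δ δ fstar : ℝ)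
    (hμ : 0 < μ) (hL : 0 < L) (hΔ : 0 ≤ Δ) (hδ : 0 ≤ δ)
    (hLmin : μ / 4 ≤ Lmin)
    (hmin : ∀ y, fstar ≤ f y)
    (hnoise : 16 * L * δ ≤ Δ ^ 2)
    (Lk : ℕ → ℝ) (hLklb : ∀ k, Lmin ≤ Lk k) (hLkub : ∀ k, Lk k ≤ 2 * L)
    (x : ℕ → EuclideanSpace ℝ (Fin n))
    (hdec : ∀ k, f (x (k + 1)) - fstar ≤
      (1 - μ / (4 * Lk k)) * (f (x k) - fstar) + Δ ^ 2 / (2 * Lk k) + 2 * δ) :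
    ∀ k : ℕ, f (x (k + 1)) - fstar ≤
      (1 - μ / (8 * L)) ^ (k + 1) * (f (x 0) - fstar) + 4 * Δ ^ 2 / μ :=
  stmt18_general f L Lmin μ Δ δ fstar hμ hLmin hmin hnoise Lk hLklb hLkub x hdec
end
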